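/- arXiv:1607.04600 — 3 statements merged into one kernel-verified Lean document; each statement's English description precedes it below -/
import Mathlib

section
/- For the bi-rainbow meander M(α₁, α₂ | α₁+α₂) with two adjacent upper rainbows of sizes α₁ and α₂ and one lower rainbow of size α₁+α₂, the number of connected components equals gcd(α₁, α₂). -/
namespace Birainbow

variable (α₁ α₂ : ℕ)

/-- The meander graph. -/
def G : SimpleGraph (Fin (2 * (α₁ + α₂))) :=
  SimpleGraph.fromRel (fun i j : Fin (2 * (α₁ + α₂)) =>
    (if (i : ℕ) < 2 * α₁ then 2 * α₁ - 1 - (i : ℕ)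
     else 2 * (α₁ + α₂) + 2 * α₁ - 1 - (i : ℕ)) = (j : ℕ) ∨
    2 * (α₁ + α₂) - 1 - (i : ℕ) = (j : ℕ))

variable {α₁ α₂} (h₁ : 0 < α₁) (h₂ : 0 < α₂)

lemma adj_lower (i : Fin (2 * (α₁ + α₂))) (hj : 2 * (α₁ + α₂) - 1 - (i : ℕ) < 2 * (α₁ + α₂)) :
    (G α₁ α₂).Adj i ⟨2 * (α₁ + α₂) - 1 - (i : ℕ), hj⟩ := by
  have hi := i.isLt
  rw [G, SimpleGraph.fromRel_adj]
  refine ⟨?_, Or.inl (Or.inr rfl)⟩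
  intro h
  have := congrArg (Fin.val) h
  simp at this
  omega

lemma adj_upper (i : Fin (2 * (α₁ + α₂)))
    (hj : (if (i : ℕ) < 2 * α₁ then 2 * α₁ - 1 - (i : ℕ)
     else 2 * (α₁ + α₂) + 2 * α₁ - 1 - (i : ℕ)) < 2 * (α₁ + α₂)) :
    (G α₁ α₂).Adj i ⟨_, hj⟩ := by
  have hi := i.isLt
  rw [G, SimpleGraph.fromRel_adj]
  refine ⟨?_, Or.inl (Or.inl rfl)⟩
  intro h
  have := congrArg (Fin.val) h
  simp only [Fin.val_mk] at this
  split at this <;> omega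

/-- one rotation step -/
lemma reach_rot (i : Fin (2 * (α₁ + α₂)))
    (hj : ((i : ℕ) + 2 * α₁) % (2 * (α₁ + α₂)) < 2 * (α₁ + α₂)) :
    (G α₁ α₂).Reachable i ⟨((i : ℕ) + 2 * α₁) % (2 * (α₁ + α₂)), hj⟩ := by
  have hi := i.isLt
  have hL : 2 * (α₁ + α₂) - 1 - (i : ℕ) < 2 * (α₁ + α₂) := by omega
  have r1 : (G α₁ α₂).Reachable i ⟨2 * (α₁ + α₂) - 1 - (i : ℕ), hL⟩ :=
    (adj_lower i hL).reachable
  set m := (⟨2 * (α₁ + α₂) - 1 - (i : ℕ), hL⟩ : Fin (2 * (α₁ + α₂))) with hm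
  have hU : (if (m : ℕ) < 2 * α₁ then 2 * α₁ - 1 - (m : ℕ)
     else 2 * (α₁ + α₂) + 2 * α₁ - 1 - (m : ℕ)) < 2 * (α₁ + α₂) := by
    simp only [hm, Fin.val_mk]; split <;> omega
  have r2 := (adj_upper m hU).reachable
  have heq : (⟨_, hU⟩ : Fin (2 * (α₁ + α₂))) =
      ⟨((i : ℕ) + 2 * α₁) % (2 * (α₁ + α₂)), hj⟩ := by
    apply Fin.ext
    simp only [hm, Fin.val_mk]
    rcases lt_or_ge (i : ℕ) (2 * α₂) with hc | hc
    · rw [if_neg (by omega), Nat.mod_eq_of_lt (by omega)]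
      omega
    · rw [if_pos (by omega)]
      rw [Nat.mod_eq_sub_mod (by omega), Nat.mod_eq_of_lt (by omega)]
      omega
  exact r1.trans (heq ▸ r2)

end Birainbow

namespace Birainbow

variable {α₁ α₂ : ℕ}

/-- rotation iterated k times -/
lemma reach_rot_k (k : ℕ) (i : Fin (2 * (α₁ + α₂)))
    (hj : ((i : ℕ) + k * (2 * α₁)) % (2 * (α₁ + α₂)) < 2 * (α₁ + α₂)) :
    (G α₁ α₂).Reachable i ⟨((i : ℕ) + k * (2 * α₁)) % (2 * (α₁ + α₂)), hj⟩ := by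
  induction k with
  | zero =>
      have : (⟨((i : ℕ) + 0 * (2 * α₁)) % (2 * (α₁ + α₂)), hj⟩ : Fin _) = i :=
        Fin.ext (by simp [Nat.mod_eq_of_lt i.isLt])
      rw [this]
  | succ k ih =>
      have hN : 0 < 2 * (α₁ + α₂) := by
        have := i.isLt; omega
      have hk : ((i : ℕ) + k * (2 * α₁)) % (2 * (α₁ + α₂)) < 2 * (α₁ + α₂) :=
        Nat.mod_lt _ hN
      have r1 := ih hk
      set m : Fin (2 * (α₁ + α₂)) := ⟨((i : ℕ) + k * (2 * α₁)) % (2 * (α₁ + α₂)), hk⟩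
      have hj2 : ((m : ℕ) + 2 * α₁) % (2 * (α₁ + α₂)) < 2 * (α₁ + α₂) := Nat.mod_lt _ hN
      have r2 := reach_rot m hj2
      have : (⟨((m : ℕ) + 2 * α₁) % (2 * (α₁ + α₂)), hj2⟩ : Fin _) =
          ⟨((i : ℕ) + (k+1) * (2 * α₁)) % (2 * (α₁ + α₂)), hj⟩ := by
        apply Fin.ext
        simp only [Fin.val_mk]
        rw [Nat.mod_add_mod]
        ring_nf
      exact r1.trans (this ▸ r2)

end Birainbow

namespace Birainbow

/-- Bezout-style: if `i ≡ j [MOD gcd a n]` then `j` is reachable from `i` by adding `a` mod `n`. -/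
lemma exists_step (a n i j : ℕ) (hn : 0 < n) (hj : j < n)
    (h : i % (Nat.gcd a n) = j % (Nat.gcd a n)) : ∃ k : ℕ, (i + k * a) % n = j := by
  have hdvd : ((Nat.gcd a n : ℤ)) ∣ (j : ℤ) - (i : ℤ) :=
    (Nat.modEq_iff_dvd (n := Nat.gcd a n)).mp h
  obtain ⟨t, ht⟩ := hdvd
  have hbez : (Nat.gcd a n : ℤ) = a * Int.gcdA a n + n * Int.gcdB a n := by
    have := Int.gcd_eq_gcd_ab (a : ℤ) (n : ℤ)
    simpa [Int.gcd_natCast_natCast] using this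
  set x := Int.gcdA a n
  set y := Int.gcdB a n
  set z : ℤ := x * t
  have hj' : (j : ℤ) = (i : ℤ) + z * a + n * (y * t) := by
    have hz : z = x * t := rfl
    linear_combination ht + t * hbez + a * t * hz.symm - a * hz.symm * t
  have key : ((i : ℤ) + z * a) % n = (j : ℤ) % n := by
    rw [hj', Int.add_mul_emod_self_left]
  set k : ℕ := (z % n).toNat with hk
  have hzk : (k : ℤ) ≡ z [ZMOD n] := by
    have h0 : 0 ≤ z % n := Int.emod_nonneg z (by exact_mod_cast hn.ne')
    have : (k : ℤ) = z % n := Int.toNat_of_nonneg h0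
    rw [this]
    exact Int.emod_emod_of_dvd z dvd_rfl
  have hfin : ((i : ℤ) + k * a) ≡ (j : ℤ) [ZMOD n] :=
    ((hzk.mul_right a).add_left (i : ℤ)).trans key
  refine ⟨k, ?_⟩
  have h1 : ((i + k * a : ℕ) : ℤ) % n = (j : ℤ) % n := by
    have := hfin
    unfold Int.ModEq at this
    push_cast
    exact_mod_cast this
  have h2 : (j : ℤ) % n = (j : ℤ) := Int.emod_eq_of_lt (by positivity) (by exact_mod_cast hj)
  have h3 : (((i + k * a) % n : ℕ) : ℤ) = ((i + k * a : ℕ) : ℤ) % n := by push_cast; ring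
  omega

/-- mirror mod. -/
lemma mirror_mod (d M i : ℕ) (hd : 0 < d) (hdM : d ∣ M) (hi : i < M) :
    (M - 1 - i) % d = d - 1 - i % d := by
  obtain ⟨m, rfl⟩ := hdM
  set r := i % d with hr
  set q := i / d with hq
  have h1 : i = d * q + r := (Nat.div_add_mod i d).symm
  have h2 : r < d := Nat.mod_lt _ hd
  have h3 : q < m := by
    by_contra hc
    push_neg at hc
    have : d * m ≤ d * q := Nat.mul_le_mul_left d hc
    omega
  have h5 : d * (q + 1) ≤ d * m := Nat.mul_le_mul_left d h3
  have h6 : d * (q + 1) = d * q + d := by rw [Nat.mul_add, Nat.mul_one]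
  have h4 : d * m - 1 - i = d * (m - q - 1) + (d - 1 - r) := by
    have : d * (m - q - 1) = d * m - d * q - d := by
      rw [Nat.mul_sub, Nat.mul_sub, Nat.mul_one]
    omega
  rw [h4, Nat.mul_add_mod, Nat.mod_eq_of_lt (by omega)]

end Birainbow

namespace Birainbow

variable {α₁ α₂ : ℕ}

lemma gcd2 : Nat.gcd (2 * α₁) (2 * (α₁ + α₂)) = 2 * Nat.gcd α₁ α₂ := by
  rw [Nat.gcd_mul_left]
  congr 1
  exact Nat.gcd_self_add_right α₁ α₂

lemma reach_class (h₁ : 0 < α₁) (h₂ : 0 < α₂) (i j : Fin (2 * (α₁ + α₂)))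
    (h : (i : ℕ) % (2 * Nat.gcd α₁ α₂) = (j : ℕ) % (2 * Nat.gcd α₁ α₂)) :
    (G α₁ α₂).Reachable i j := by
  obtain ⟨k, hk⟩ := exists_step (2 * α₁) (2 * (α₁ + α₂)) i j (by omega) j.isLt
    (by rw [gcd2]; exact h)
  have hlt : ((i : ℕ) + k * (2 * α₁)) % (2 * (α₁ + α₂)) < 2 * (α₁ + α₂) :=
    Nat.mod_lt _ (by omega)
  have := reach_rot_k k i hlt
  rwa [show (⟨((i : ℕ) + k * (2 * α₁)) % (2 * (α₁ + α₂)), hlt⟩ : Fin _) = j from Fin.ext hk]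
    at this

/-- component label -/
def lbl (α₁ α₂ : ℕ) (i : ℕ) : ℕ :=
  if i % (2 * Nat.gcd α₁ α₂) < Nat.gcd α₁ α₂ then i % (2 * Nat.gcd α₁ α₂)
  else 2 * Nat.gcd α₁ α₂ - 1 - i % (2 * Nat.gcd α₁ α₂)

lemma lbl_lt (hg : 0 < Nat.gcd α₁ α₂) (i : ℕ) : lbl α₁ α₂ i < Nat.gcd α₁ α₂ := by
  unfold lbl
  have : i % (2 * Nat.gcd α₁ α₂) < 2 * Nat.gcd α₁ α₂ := Nat.mod_lt _ (by omega)
  split <;> omega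

lemma lbl_mirror (hg : 0 < Nat.gcd α₁ α₂) (M i : ℕ)
    (hdM : 2 * Nat.gcd α₁ α₂ ∣ M) (hi : i < M) :
    lbl α₁ α₂ (M - 1 - i) = lbl α₁ α₂ i := by
  unfold lbl
  rw [mirror_mod _ M i (by omega) hdM hi]
  have : i % (2 * Nat.gcd α₁ α₂) < 2 * Nat.gcd α₁ α₂ := Nat.mod_lt _ (by omega)
  split <;> split <;> omega

lemma dvd_N : 2 * Nat.gcd α₁ α₂ ∣ 2 * (α₁ + α₂) :=
  Nat.mul_dvd_mul_left 2 (Nat.dvd_add (Nat.gcd_dvd_left _ _) (Nat.gcd_dvd_right _ _))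

lemma dvd_2a1 : 2 * Nat.gcd α₁ α₂ ∣ 2 * α₁ :=
  Nat.mul_dvd_mul_left 2 (Nat.gcd_dvd_left _ _)

lemma lbl_rel (hg : 0 < Nat.gcd α₁ α₂) (i j : Fin (2 * (α₁ + α₂)))
    (h : (if (i : ℕ) < 2 * α₁ then 2 * α₁ - 1 - (i : ℕ)
         else 2 * (α₁ + α₂) + 2 * α₁ - 1 - (i : ℕ)) = (j : ℕ) ∨
        2 * (α₁ + α₂) - 1 - (i : ℕ) = (j : ℕ)) :
    lbl α₁ α₂ (i : ℕ) = lbl α₁ α₂ (j : ℕ) := by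
  rcases h with h | h
  · by_cases hc : (i : ℕ) < 2 * α₁
    · rw [if_pos hc] at h
      rw [← h]
      exact (lbl_mirror hg (2 * α₁) i dvd_2a1 hc).symm
    · rw [if_neg hc] at h
      rw [← h, show 2 * (α₁ + α₂) + 2 * α₁ - 1 - (i : ℕ)
          = (2 * (α₁ + α₂) + 2 * α₁) - 1 - (i : ℕ) from rfl]
      exact (lbl_mirror hg _ i (Nat.dvd_add dvd_N dvd_2a1) (by have := i.isLt; omega)).symm
  · rw [← h]
    exact (lbl_mirror hg _ i dvd_N i.isLt).symm

lemma lbl_adj (hg : 0 < Nat.gcd α₁ α₂) {i j : Fin (2 * (α₁ + α₂))}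
    (h : (G α₁ α₂).Adj i j) : lbl α₁ α₂ (i : ℕ) = lbl α₁ α₂ (j : ℕ) := by
  rw [G, SimpleGraph.fromRel_adj] at h
  rcases h with ⟨-, h | h⟩
  · exact lbl_rel hg i j h
  · exact (lbl_rel hg j i h).symm

lemma card_components (h₁ : 0 < α₁) (h₂ : 0 < α₂) :
    Nat.card (G α₁ α₂).ConnectedComponent = Nat.gcd α₁ α₂ := by
  have hg : 0 < Nat.gcd α₁ α₂ := Nat.gcd_pos_of_pos_left _ h₁
  have hga : Nat.gcd α₁ α₂ ≤ α₁ := Nat.gcd_le_left _ h₁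
  -- the lift
  let f : Fin (2 * (α₁ + α₂)) → Fin (Nat.gcd α₁ α₂) := fun v => ⟨lbl α₁ α₂ (v : ℕ), lbl_lt hg _⟩
  have hwalk0 : ∀ (v w : Fin (2 * (α₁ + α₂))) (p : (G α₁ α₂).Walk v w), f v = f w := by
    intro v w p
    induction p with
    | nil => rfl
    | cons hadj p ih => exact (Fin.ext (lbl_adj hg hadj)).trans ih
  have hwalk : ∀ (v w : Fin (2 * (α₁ + α₂))) (p : (G α₁ α₂).Walk v w), p.IsPath → f v = f w :=
    fun v w p _ => hwalk0 v w p
  let F : (G α₁ α₂).ConnectedComponent → Fin (Nat.gcd α₁ α₂) := SimpleGraph.ConnectedComponent.lift f hwalk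
  have hbij : Function.Bijective F := by
    constructor
    · intro c₁ c₂
      refine SimpleGraph.ConnectedComponent.ind₂ ?_ c₁ c₂
      intro v w hvw
      simp only [F, SimpleGraph.ConnectedComponent.lift_mk] at hvw
      have hl : lbl α₁ α₂ (v : ℕ) = lbl α₁ α₂ (w : ℕ) := congrArg Fin.val hvw
      apply SimpleGraph.ConnectedComponent.sound
      have hv : (v : ℕ) % (2 * Nat.gcd α₁ α₂) < 2 * Nat.gcd α₁ α₂ := Nat.mod_lt _ (by omega)
      have hw : (w : ℕ) % (2 * Nat.gcd α₁ α₂) < 2 * Nat.gcd α₁ α₂ := Nat.mod_lt _ (by omega)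
      unfold lbl at hl
      by_cases hcv : (v : ℕ) % (2 * Nat.gcd α₁ α₂) < Nat.gcd α₁ α₂ <;> by_cases hcw : (w : ℕ) % (2 * Nat.gcd α₁ α₂) < Nat.gcd α₁ α₂
      · rw [if_pos hcv, if_pos hcw] at hl
        exact reach_class h₁ h₂ v w hl
      · rw [if_pos hcv, if_neg hcw] at hl
        have hw' : 2 * (α₁ + α₂) - 1 - (w : ℕ) < 2 * (α₁ + α₂) := by
          have := w.isLt; omega
        have hadj := adj_lower w hw'
        have hmir : (2 * (α₁ + α₂) - 1 - (w : ℕ)) % (2 * Nat.gcd α₁ α₂) = 2 * Nat.gcd α₁ α₂ - 1 - (w : ℕ) % (2 * Nat.gcd α₁ α₂) :=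
          mirror_mod (2 * Nat.gcd α₁ α₂) _ _ (by omega) dvd_N w.isLt
        have := reach_class h₁ h₂ v ⟨2 * (α₁ + α₂) - 1 - (w : ℕ), hw'⟩ (by
          simp only [Fin.val_mk]; rw [hmir]; omega)
        exact this.trans hadj.reachable.symm
      · rw [if_neg hcv, if_pos hcw] at hl
        have hv' : 2 * (α₁ + α₂) - 1 - (v : ℕ) < 2 * (α₁ + α₂) := by
          have := v.isLt; omega
        have hadj := adj_lower v hv'
        have hmir : (2 * (α₁ + α₂) - 1 - (v : ℕ)) % (2 * Nat.gcd α₁ α₂) = 2 * Nat.gcd α₁ α₂ - 1 - (v : ℕ) % (2 * Nat.gcd α₁ α₂) :=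
          mirror_mod (2 * Nat.gcd α₁ α₂) _ _ (by omega) dvd_N v.isLt
        have := reach_class h₁ h₂ ⟨2 * (α₁ + α₂) - 1 - (v : ℕ), hv'⟩ w (by
          simp only [Fin.val_mk]; rw [hmir]; omega)
        exact hadj.reachable.trans this
      · rw [if_neg hcv, if_neg hcw] at hl
        exact reach_class h₁ h₂ v w (by omega)
    · intro r
      have hr : (r : ℕ) < 2 * (α₁ + α₂) := by have := r.isLt; omega
      refine ⟨(G α₁ α₂).connectedComponentMk ⟨(r : ℕ), hr⟩, ?_⟩
      simp only [F, SimpleGraph.ConnectedComponent.lift_mk]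
      apply Fin.ext
      simp only [f, Fin.val_mk]
      unfold lbl
      rw [Nat.mod_eq_of_lt (by have := r.isLt; omega),
        if_pos (by exact r.isLt)]
  rw [Nat.card_eq_of_bijective F hbij]
  simp

end Birainbow

/-- Bi-rainbow meander `M(α₁, α₂ | α₁+α₂)`: two adjacent nested upper rainbows of
sizes `α₁` and `α₂`, and one lower rainbow of size `α₁+α₂`, on `N = 2(α₁+α₂)`
vertices (0-indexed).  The upper arch involution maps `i ↦ 2α₁−1−i` on the first
block and `i ↦ N+2α₁−1−i` on the second; the lower rainbow maps `i ↦ N−1−i`.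
The number of connected components of the meander equals `gcd(α₁, α₂)`. -/
theorem birainbow_two_blocks_components (α₁ α₂ : ℕ) (h₁ : 0 < α₁) (h₂ : 0 < α₂) :
    Nat.card
      (SimpleGraph.fromRel (fun i j : Fin (2 * (α₁ + α₂)) =>
        (if (i : ℕ) < 2 * α₁ then 2 * α₁ - 1 - (i : ℕ)
         else 2 * (α₁ + α₂) + 2 * α₁ - 1 - (i : ℕ)) = (j : ℕ) ∨  -- upper arches
        2 * (α₁ + α₂) - 1 - (i : ℕ) = (j : ℕ)                    -- lower rainbow
        )).ConnectedComponent = Nat.gcd α₁ α₂ :=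
  Birainbow.card_components h₁ h₂
end

section
/- For the bi-rainbow meander M(α₁, α₂, α₃ | α₁+α₂+α₃) with three adjacent upper rainbows of sizes α₁, α₂, α₃ and one lower rainbow, the number of connected components equals gcd(α₁+α₂, α₂+α₃). -/
/-- Generic counting: if a graph `fromRel`-style has a colouring constant on edges,
surjective, and with connected fibres, the number of components is the card of colours. -/
private lemma birainbow_card_aux {V β : Type*} (G : SimpleGraph V) (f : V → β)
    (hadj : ∀ v w, G.Adj v w → f v = f w)
    (hsurj : ∀ b, ∃ v, f v = b)
    (hinj : ∀ v w, f v = f w → G.Reachable v w) :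
    Nat.card G.ConnectedComponent = Nat.card β := by
  have hwalk : ∀ v w, G.Reachable v w → f v = f w := by
    intro v w h
    obtain ⟨p⟩ := h
    induction p with
    | nil => rfl
    | cons h p ih => exact (hadj _ _ h).trans ih
  let F : G.ConnectedComponent → β :=
    SimpleGraph.ConnectedComponent.lift f (fun v w p _ => hwalk v w ⟨p⟩)
  have hbij : Function.Bijective F := by
    constructor
    · intro c d
      refine SimpleGraph.ConnectedComponent.ind₂ (fun v w h => ?_) c d
      exact SimpleGraph.ConnectedComponent.sound (hinj v w h)
    · intro b
      obtain ⟨v, hv⟩ := hsurj b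
      exact ⟨G.connectedComponentMk v, hv⟩
  rw [Nat.card_eq_of_bijective F hbij]

/-- Bezout-style step: reachability of all residues by repeatedly adding `a` mod `a+b`. -/
private lemma birainbow_exists_step (a b k k' : ℕ) (ha : 0 < a) (hb : 0 < b)
    (hd : (Nat.gcd a b : ℤ) ∣ (k' : ℤ) - (k : ℤ)) (hk' : k' < a + b) :
    ∃ j : ℕ, (k + j * a) % (a + b) = k' := by
  obtain ⟨t, ht⟩ := hd
  have hbez : (Nat.gcd a b : ℤ) = a * Nat.gcdA a b + b * Nat.gcdB a b := Nat.gcd_eq_gcd_ab a b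
  set m : ℤ := (a : ℤ) + b with hm
  have hm0 : 0 < m := by positivity
  set j₀ : ℤ := (Nat.gcdA a b - Nat.gcdB a b) * t with hj₀
  have key : (a : ℤ) * j₀ ≡ (k' : ℤ) - k [ZMOD m] := by
    have h0 : (k' : ℤ) - k - (a : ℤ) * j₀ = m * (Nat.gcdB a b * t) := by
      rw [ht, hj₀, hm]; linear_combination t * hbez
    exact Int.modEq_iff_dvd.mpr ⟨_, h0⟩
  set j : ℕ := (j₀ % m).toNat with hj
  have hjz : (j : ℤ) = j₀ % m := Int.toNat_of_nonneg (Int.emod_nonneg _ (by omega))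
  have key2 : ((k : ℤ) + j * a) ≡ (k' : ℤ) [ZMOD m] := by
    have h1 : (a : ℤ) * j ≡ (a : ℤ) * j₀ [ZMOD m] := by
      apply Int.ModEq.mul_left
      rw [hjz]; exact Int.emod_emod_of_dvd j₀ dvd_rfl
    calc (k : ℤ) + j * a ≡ (k : ℤ) + a * j₀ [ZMOD m] := by
          exact Int.ModEq.add_left _ (by rw [mul_comm]; exact h1)
      _ ≡ (k : ℤ) + ((k' : ℤ) - k) [ZMOD m] := Int.ModEq.add_left _ key
      _ = (k' : ℤ) := by ring
  refine ⟨j, ?_⟩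
  have h3 : ((k + j * a : ℕ) : ℤ) % m = (k' : ℤ) % m := by
    push_cast
    exact key2
  have h4 : (k' : ℤ) % m = (k' : ℤ) := Int.emod_eq_of_lt (by positivity) (by rw [hm]; exact_mod_cast hk')
  have h5 : (((k + j * a) % (a + b) : ℕ) : ℤ) = ((k + j * a : ℕ) : ℤ) % m := by
    rw [hm]; push_cast; rfl
  have : (((k + j * a) % (a + b) : ℕ) : ℤ) = (k' : ℤ) := by rw [h5, h3, h4]
  exact_mod_cast this

/-- Bi-rainbow meander `M(α₁, α₂, α₃ | α₁+α₂+α₃)`: three adjacent nested upper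
rainbows of sizes `α₁, α₂, α₃` and one lower rainbow, on `N = 2(α₁+α₂+α₃)`
vertices (0-indexed).  Within the block of size `2αⱼ` starting at `s`, the upper
arch involution maps `i ↦ 2s+2αⱼ−1−i`; the lower rainbow maps `i ↦ N−1−i`.
The number of connected components equals `gcd(α₁+α₂, α₂+α₃)`. -/
theorem birainbow_three_blocks_components (α₁ α₂ α₃ : ℕ)
    (h₁ : 0 < α₁) (h₂ : 0 < α₂) (h₃ : 0 < α₃) :
    Nat.card
      (SimpleGraph.fromRel (fun i j : Fin (2 * (α₁ + α₂ + α₃)) =>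
        (if (i : ℕ) < 2 * α₁ then 2 * α₁ - 1 - (i : ℕ)
         else if (i : ℕ) < 2 * (α₁ + α₂) then 4 * α₁ + 2 * α₂ - 1 - (i : ℕ)
         else 4 * α₁ + 4 * α₂ + 2 * α₃ - 1 - (i : ℕ)) = (j : ℕ) ∨  -- upper arches
        2 * (α₁ + α₂ + α₃) - 1 - (i : ℕ) = (j : ℕ)                 -- lower rainbow
        )).ConnectedComponent = Nat.gcd (α₁ + α₂) (α₂ + α₃) := by
  obtain ⟨g, hg⟩ : ∃ g, g = Nat.gcd (α₁ + α₂) (α₂ + α₃) := ⟨_, rfl⟩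
  rw [← hg]
  set G := SimpleGraph.fromRel (fun i j : Fin (2 * (α₁ + α₂ + α₃)) =>
        (if (i : ℕ) < 2 * α₁ then 2 * α₁ - 1 - (i : ℕ)
         else if (i : ℕ) < 2 * (α₁ + α₂) then 4 * α₁ + 2 * α₂ - 1 - (i : ℕ)
         else 4 * α₁ + 4 * α₂ + 2 * α₃ - 1 - (i : ℕ)) = (j : ℕ) ∨
        2 * (α₁ + α₂ + α₃) - 1 - (i : ℕ) = (j : ℕ)) with hG
  have hga : g ∣ α₁ + α₂ := hg ▸ Nat.gcd_dvd_left _ _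
  have hgb : g ∣ α₂ + α₃ := hg ▸ Nat.gcd_dvd_right _ _
  have hg1 : 0 < g := by
    rw [hg]; exact Nat.gcd_pos_of_pos_left _ (by omega)
  have hgle : g ≤ α₂ + α₃ := Nat.le_of_dvd (by omega) hgb
  have hA' : (α₁ : ZMod g) + (α₂ : ZMod g) = 0 := by
    obtain ⟨c, hc⟩ := hga
    have h0 : ((α₁ + α₂ : ℕ) : ZMod g) = 0 := by
      rw [hc]; push_cast; simp [ZMod.natCast_self]
    push_cast at h0; exact h0
  have hB' : (α₂ : ZMod g) + (α₃ : ZMod g) = 0 := by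
    obtain ⟨c, hc⟩ := hgb
    have h0 : ((α₂ + α₃ : ℕ) : ZMod g) = 0 := by
      rw [hc]; push_cast; simp [ZMod.natCast_self]
    push_cast at h0; exact h0
  have hAB : (α₁ : ZMod g) = (α₃ : ZMod g) := by linear_combination hA' - hB'
  set f : Fin (2 * (α₁ + α₂ + α₃)) → ZMod g := fun v =>
    if (v : ℕ) % 2 = 0 then (((v : ℕ) / 2 : ℕ) : ZMod g)
    else (((2 * (α₁ + α₂ + α₃) - 1 - (v : ℕ)) / 2 : ℕ) : ZMod g) with hf_eq
  -- colour is constant along the defining relation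
  have hrel_col : ∀ i j : Fin (2 * (α₁ + α₂ + α₃)),
      ((if (i : ℕ) < 2 * α₁ then 2 * α₁ - 1 - (i : ℕ)
         else if (i : ℕ) < 2 * (α₁ + α₂) then 4 * α₁ + 2 * α₂ - 1 - (i : ℕ)
         else 4 * α₁ + 4 * α₂ + 2 * α₃ - 1 - (i : ℕ)) = (j : ℕ) ∨
        2 * (α₁ + α₂ + α₃) - 1 - (i : ℕ) = (j : ℕ)) → f i = f j := by
    intro i j hrel
    have hi := i.isLt
    have hj := j.isLt
    simp only [hf_eq]
    rcases hrel with h | h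
    · split_ifs at h with c1 c2
      · -- first block
        by_cases hp : (i : ℕ) % 2 = 0
        · rw [if_pos hp, if_neg (by omega)]
          have e1 : (2 * (α₁ + α₂ + α₃) - 1 - (j : ℕ)) / 2 = (i : ℕ) / 2 + (α₂ + α₃) := by omega
          rw [e1]; push_cast; linear_combination -hB'
        · rw [if_neg hp, if_pos (by omega)]
          have e1 : (2 * (α₁ + α₂ + α₃) - 1 - (i : ℕ)) / 2 = (j : ℕ) / 2 + (α₂ + α₃) := by omega
          rw [e1]; push_cast; linear_combination hB'
      · -- second block
        by_cases hp : (i : ℕ) % 2 = 0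
        · rw [if_pos hp, if_neg (by omega)]
          have e1 : (2 * (α₁ + α₂ + α₃) - 1 - (j : ℕ)) / 2 + α₁ = (i : ℕ) / 2 + α₃ := by omega
          have e2 := congrArg (Nat.cast (R := ZMod g)) e1
          push_cast at e2
          linear_combination hAB - e2
        · rw [if_neg hp, if_pos (by omega)]
          have e1 : (2 * (α₁ + α₂ + α₃) - 1 - (i : ℕ)) / 2 + α₁ = (j : ℕ) / 2 + α₃ := by omega
          have e2 := congrArg (Nat.cast (R := ZMod g)) e1
          push_cast at e2
          linear_combination e2 - hAB
      · -- third block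
        by_cases hp : (i : ℕ) % 2 = 0
        · rw [if_pos hp, if_neg (by omega)]
          have e1 : (2 * (α₁ + α₂ + α₃) - 1 - (j : ℕ)) / 2 + (α₁ + α₂) = (i : ℕ) / 2 := by omega
          have e2 := congrArg (Nat.cast (R := ZMod g)) e1
          push_cast at e2
          linear_combination hA' - e2
        · rw [if_neg hp, if_pos (by omega)]
          have e1 : (2 * (α₁ + α₂ + α₃) - 1 - (i : ℕ)) / 2 + (α₁ + α₂) = (j : ℕ) / 2 := by omega
          have e2 := congrArg (Nat.cast (R := ZMod g)) e1
          push_cast at e2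
          linear_combination e2 - hA'
    · -- lower rainbow
      by_cases hp : (i : ℕ) % 2 = 0
      · rw [if_pos hp, if_neg (by omega)]
        congr 1
        omega
      · rw [if_neg hp, if_pos (by omega)]
        congr 1
        omega
  -- basic adjacency constructor
  have adj_mk : ∀ (x y : ℕ) (hx : x < 2 * (α₁ + α₂ + α₃)) (hy : y < 2 * (α₁ + α₂ + α₃)),
      x ≠ y →
      ((if x < 2 * α₁ then 2 * α₁ - 1 - x
         else if x < 2 * (α₁ + α₂) then 4 * α₁ + 2 * α₂ - 1 - x
         else 4 * α₁ + 4 * α₂ + 2 * α₃ - 1 - x) = y ∨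
        2 * (α₁ + α₂ + α₃) - 1 - x = y) →
      G.Adj ⟨x, hx⟩ ⟨y, hy⟩ := by
    intro x y hx hy hne hr
    rw [hG, SimpleGraph.fromRel_adj]
    exact ⟨fun h => hne (congrArg Fin.val h), Or.inl hr⟩
  have reach_congr : ∀ (u w : Fin (2 * (α₁ + α₂ + α₃))) (y : ℕ)
      (hy : y < 2 * (α₁ + α₂ + α₃)), (w : ℕ) = y → G.Reachable u w → G.Reachable u ⟨y, hy⟩ := by
    intro u w y hy h R
    have : w = ⟨y, hy⟩ := Fin.ext h
    exact this ▸ R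
  -- single lower-rainbow edges
  have step_low : ∀ (x : ℕ) (hx : x < 2 * (α₁ + α₂ + α₃)),
      G.Adj ⟨x, hx⟩ ⟨2 * (α₁ + α₂ + α₃) - 1 - x, by omega⟩ :=
    fun x hx => adj_mk _ _ _ _ (by omega) (Or.inr rfl)
  -- the three elementary moves on even vertices
  have step1 : ∀ (k : ℕ) (_hk : k < α₃),
      G.Reachable ⟨2 * k, by omega⟩ ⟨2 * (k + (α₁ + α₂)), by omega⟩ := by
    intro k hk
    refine ((step_low (2 * k) (by omega)).reachable).trans (SimpleGraph.Adj.reachable ?_)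
    refine adj_mk _ _ (by omega) (by omega) (by omega) (Or.inl ?_)
    rw [if_neg (by omega), if_neg (by omega)]
    omega
  have step2 : ∀ (k : ℕ) (_h1 : α₃ ≤ k) (_h2 : k < α₂ + α₃),
      G.Reachable ⟨2 * k, by omega⟩ ⟨2 * (k + α₁ - α₃), by omega⟩ := by
    intro k hk1 hk2
    refine ((step_low (2 * k) (by omega)).reachable).trans (SimpleGraph.Adj.reachable ?_)
    refine adj_mk _ _ (by omega) (by omega) (by omega) (Or.inl ?_)
    rw [if_neg (by omega), if_pos (by omega)]
    omega
  have step3 : ∀ (k : ℕ) (_h1 : α₂ + α₃ ≤ k) (_h2 : k < α₁ + α₂ + α₃),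
      G.Reachable ⟨2 * k, by omega⟩ ⟨2 * (k - (α₂ + α₃)), by omega⟩ := by
    intro k hk1 hk2
    refine ((step_low (2 * k) (by omega)).reachable).trans (SimpleGraph.Adj.reachable ?_)
    refine adj_mk _ _ (by omega) (by omega) (by omega) (Or.inl ?_)
    rw [if_pos (by omega)]
    omega
  -- iterating the rotation by (α₁+α₂) modulo (α₁+α₂)+(α₂+α₃)
  have hstep : ∀ k p : ℕ, (k + (p + 1) * (α₁ + α₂)) % ((α₁ + α₂) + (α₂ + α₃))
      = ((k + p * (α₁ + α₂)) % ((α₁ + α₂) + (α₂ + α₃)) + (α₁ + α₂)) % ((α₁ + α₂) + (α₂ + α₃)) := by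
    intro k p
    rw [Nat.mod_add_mod]
    congr 1
    ring
  have reachRot : ∀ (j k : ℕ) (_hk : k < α₁ + α₂ + α₃),
      ∀ hx : (k + j * (α₁ + α₂)) % ((α₁ + α₂) + (α₂ + α₃)) < α₁ + α₂ + α₃,
      G.Reachable ⟨2 * k, by omega⟩
        ⟨2 * ((k + j * (α₁ + α₂)) % ((α₁ + α₂) + (α₂ + α₃))), by omega⟩ := by
    intro j
    induction j using Nat.strong_induction_on with
    | _ j ih =>
      intro k hk hx
      match j with
      | 0 =>
        have hx0 : (k + 0 * (α₁ + α₂)) % ((α₁ + α₂) + (α₂ + α₃)) = k := by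
          rw [zero_mul, add_zero, Nat.mod_eq_of_lt (by omega)]
        refine reach_congr _ _ _ _ ?_ (SimpleGraph.Reachable.refl _)
        show 2 * k = 2 * ((k + 0 * (α₁ + α₂)) % ((α₁ + α₂) + (α₂ + α₃)))
        rw [hx0]
      | (j' + 1) =>
        set x := (k + j' * (α₁ + α₂)) % ((α₁ + α₂) + (α₂ + α₃)) with hxdef
        have hxm : x < (α₁ + α₂) + (α₂ + α₃) := Nat.mod_lt _ (by omega)
        by_cases hxn : x < α₁ + α₂ + α₃
        · have R1 := ih j' (by omega) k hk hxn
          by_cases hx3 : x < α₃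
          · have hy : (x + (α₁ + α₂)) % ((α₁ + α₂) + (α₂ + α₃)) = x + (α₁ + α₂) :=
              Nat.mod_eq_of_lt (by omega)
            refine reach_congr _ _ _ _ ?_ (R1.trans (step1 x hx3))
            show 2 * (x + (α₁ + α₂)) = 2 * ((k + (j' + 1) * (α₁ + α₂)) % ((α₁ + α₂) + (α₂ + α₃)))
            rw [hstep k j', ← hxdef, hy]
          · by_cases hx4 : x < α₂ + α₃
            · exfalso
              have : (k + (j' + 1) * (α₁ + α₂)) % ((α₁ + α₂) + (α₂ + α₃)) = x + (α₁ + α₂) := by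
                rw [hstep k j', ← hxdef, Nat.mod_eq_of_lt (by omega)]
              omega
            · have hy : (x + (α₁ + α₂)) % ((α₁ + α₂) + (α₂ + α₃)) = x - (α₂ + α₃) := by
                rw [Nat.mod_eq_sub_mod (by omega),
                  show x + (α₁ + α₂) - ((α₁ + α₂) + (α₂ + α₃)) = x - (α₂ + α₃) by omega,
                  Nat.mod_eq_of_lt (by omega)]
              refine reach_congr _ _ _ _ ?_ (R1.trans (step3 x (by omega) hxn))
              show 2 * (x - (α₂ + α₃)) = 2 * ((k + (j' + 1) * (α₁ + α₂)) % ((α₁ + α₂) + (α₂ + α₃)))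
              rw [hstep k j', ← hxdef, hy]
        · -- x in the gap [n, m)
          have hj'0 : j' ≠ 0 := by
            rintro rfl
            rw [zero_mul, add_zero, Nat.mod_eq_of_lt (by omega)] at hxdef
            omega
          obtain ⟨j'', rfl⟩ := Nat.exists_eq_succ_of_ne_zero hj'0
          set w := (k + j'' * (α₁ + α₂)) % ((α₁ + α₂) + (α₂ + α₃)) with hwdef
          have hwm : w < (α₁ + α₂) + (α₂ + α₃) := Nat.mod_lt _ (by omega)
          have hxw : x = (w + (α₁ + α₂)) % ((α₁ + α₂) + (α₂ + α₃)) := by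
            rw [hxdef, hstep k j'', ← hwdef]
          have hwa : w + (α₁ + α₂) < (α₁ + α₂) + (α₂ + α₃) := by
            by_contra hcon
            push_neg at hcon
            rw [Nat.mod_eq_sub_mod (by omega), Nat.mod_eq_of_lt (by omega)] at hxw
            omega
          have hxeq : x = w + (α₁ + α₂) := by rw [hxw, Nat.mod_eq_of_lt hwa]
          have hw1 : α₃ ≤ w := by omega
          have hw2 : w < α₂ + α₃ := by omega
          have R1 := ih j'' (by omega) k hk (by omega)
          have hy : (x + (α₁ + α₂)) % ((α₁ + α₂) + (α₂ + α₃)) = w + α₁ - α₃ := by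
            rw [Nat.mod_eq_sub_mod (by omega),
              show x + (α₁ + α₂) - ((α₁ + α₂) + (α₂ + α₃)) = w + α₁ - α₃ by omega,
              Nat.mod_eq_of_lt (by omega)]
          refine reach_congr _ _ _ _ ?_ (R1.trans (step2 w hw1 hw2))
          show 2 * (w + α₁ - α₃) = 2 * ((k + (j'' + 1 + 1) * (α₁ + α₂)) % ((α₁ + α₂) + (α₂ + α₃)))
          rw [hstep k (j'' + 1), ← hxdef, hy]
  -- every vertex reaches a canonical even vertex of its colour
  have toEven : ∀ v : Fin (2 * (α₁ + α₂ + α₃)), ∃ k : ℕ, ∃ hk : k < α₁ + α₂ + α₃,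
      G.Reachable v ⟨2 * k, by omega⟩ ∧ f v = (k : ZMod g) := by
    intro v
    have hv := v.isLt
    by_cases hp : (v : ℕ) % 2 = 0
    · refine ⟨(v : ℕ) / 2, by omega, ?_, ?_⟩
      · exact reach_congr v v _ _ (by omega) (SimpleGraph.Reachable.refl _)
      · simp only [hf_eq]; rw [if_pos hp]
    · refine ⟨(2 * (α₁ + α₂ + α₃) - 1 - (v : ℕ)) / 2, by omega, ?_, ?_⟩
      · refine reach_congr v ⟨2 * (α₁ + α₂ + α₃) - 1 - (v : ℕ), by omega⟩ _ _
          (show 2 * (α₁ + α₂ + α₃) - 1 - (v : ℕ)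
            = 2 * ((2 * (α₁ + α₂ + α₃) - 1 - (v : ℕ)) / 2) by omega) ?_
        exact (step_low (v : ℕ) v.isLt).reachable
      · simp only [hf_eq]; rw [if_neg hp]
  -- assemble
  rw [← Nat.card_zmod g]
  refine birainbow_card_aux G f ?_ ?_ ?_
  · intro v w hadj
    rw [hG, SimpleGraph.fromRel_adj] at hadj
    obtain ⟨-, hr | hr⟩ := hadj
    · exact hrel_col _ _ hr
    · exact (hrel_col _ _ hr).symm
  · intro r
    haveI : NeZero g := ⟨by omega⟩
    refine ⟨⟨2 * ZMod.val r, by have := ZMod.val_lt r; omega⟩, ?_⟩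
    simp only [hf_eq]
    show (if 2 * ZMod.val r % 2 = 0 then ((2 * ZMod.val r / 2 : ℕ) : ZMod g)
      else ((2 * (α₁ + α₂ + α₃) - 1 - 2 * ZMod.val r) / 2 : ℕ)) = r
    rw [if_pos (by omega), show 2 * ZMod.val r / 2 = ZMod.val r by omega]
    exact ZMod.natCast_rightInverse r
  · intro v w hvw
    obtain ⟨k, hk, Rv, hcv⟩ := toEven v
    obtain ⟨k', hk', Rw, hcw⟩ := toEven w
    have hkk' : (k : ZMod g) = (k' : ZMod g) := by rw [← hcv, ← hcw, hvw]
    have hmod : k ≡ k' [MOD g] := (ZMod.natCast_eq_natCast_iff k k' g).mp hkk'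
    have hdvd : ((Nat.gcd (α₁ + α₂) (α₂ + α₃) : ℕ) : ℤ) ∣ (k' : ℤ) - (k : ℤ) := by
      rw [← hg]; exact hmod.dvd
    obtain ⟨j, hj⟩ := birainbow_exists_step (α₁ + α₂) (α₂ + α₃) k k' (by omega) (by omega)
      hdvd (by omega)
    have R := reachRot j k hk (by rw [hj]; omega)
    have R' := reach_congr _ _ (2 * k') (by omega)
      (by show 2 * ((k + j * (α₁ + α₂)) % ((α₁ + α₂) + (α₂ + α₃))) = 2 * k'; rw [hj]) R
    exact Rv.trans (R'.trans Rw.symm)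
end

section
/- Opening a closed meander with N vertices into a lower rainbow meander with 2N vertices preserves the number of connected components: if the original meander has upper arch set A and lower arch set B on vertices {1,…,N}, then the meander on {1,…,2N} with upper arches A ∪ {(2N+1−i, 2N+1−j) : (i,j) ∈ B} and lower rainbow arches (i, 2N+1−i) has the same number of connected components. -/
/-!
Folding the opened meander in half, `x ↦ min x (2N - 1 - x)`, identifies the endpoints of each
rainbow arch and sends the upper arches on the left half to the arches of `u` and those on the
right half to the reflected arches of `l`; conversely an arch of `l` between `i` and `j` is
recovered in the opened meander as the path `i — 2N+1-i — 2N+1-j — j` through two rainbow arches.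
So the fold and the inclusion of the left half induce mutually inverse maps on components.
-/

namespace SimpleGraph

variable {V W : Type*} {G : SimpleGraph V} {H : SimpleGraph W}

theorem reachable_fromRel_of_rel {r : V → V → Prop} {a b : V} (h : r a b) :
    (fromRel r).Reachable a b := by
  by_cases hab : a = b
  · exact hab ▸ Reachable.refl a
  · exact Adj.reachable ((fromRel_adj r a b).2 ⟨hab, Or.inl h⟩)

theorem reachable_of_fromRel_adj {r : V → V → Prop} (f : V → W)
    (hf : ∀ a b, r a b → H.Reachable (f a) (f b)) (a b : V) (hab : (fromRel r).Adj a b) :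
    H.Reachable (f a) (f b) :=
  hab.2.elim (hf a b) fun h => (hf b a h).symm

theorem Reachable.map_of_adj_reachable (f : V → W)
    (hf : ∀ a b, G.Adj a b → H.Reachable (f a) (f b)) {a b : V} (h : G.Reachable a b) :
    H.Reachable (f a) (f b) := by
  rw [reachable_iff_reflTransGen] at h ⊢
  exact h.lift' f fun a b hab => (reachable_iff_reflTransGen _ _).1 (hf a b hab)

def ConnectedComponent.equivOfReachable (f : V → W) (g : W → V)
    (hf : ∀ a b, G.Adj a b → H.Reachable (f a) (f b))
    (hg : ∀ a b, H.Adj a b → G.Reachable (g a) (g b))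
    (hgf : ∀ v, G.Reachable (g (f v)) v) (hfg : ∀ w, H.Reachable (f (g w)) w) :
    G.ConnectedComponent ≃ H.ConnectedComponent where
  toFun := ConnectedComponent.lift (fun v => H.connectedComponentMk (f v))
    fun _ _ p _ => ConnectedComponent.sound (p.reachable.map_of_adj_reachable f hf)
  invFun := ConnectedComponent.lift (fun w => G.connectedComponentMk (g w))
    fun _ _ p _ => ConnectedComponent.sound (p.reachable.map_of_adj_reachable g hg)
  left_inv := ConnectedComponent.ind fun v => ConnectedComponent.sound (hgf v)
  right_inv := ConnectedComponent.ind fun w => ConnectedComponent.sound (hfg w)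

end SimpleGraph

namespace Meander

open SimpleGraph

variable {N : ℕ} {u l : ℕ → ℕ}

/-- Vertex `k` of the paper is `k - 1 : Fin N`. -/
abbrev closed (N : ℕ) (u l : ℕ → ℕ) : SimpleGraph (Fin N) :=
  fromRel fun i j => u ((i : ℕ) + 1) = (j : ℕ) + 1 ∨ l ((i : ℕ) + 1) = (j : ℕ) + 1

def openedUpper (N : ℕ) (u l : ℕ → ℕ) (k : ℕ) : ℕ :=
  if k ≤ N then u k else 2 * N + 1 - l (2 * N + 1 - k)

abbrev opened (N : ℕ) (u l : ℕ → ℕ) : SimpleGraph (Fin (2 * N)) :=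
  fromRel fun x y => openedUpper N u l ((x : ℕ) + 1) = (y : ℕ) + 1 ∨
    2 * N + 1 - ((x : ℕ) + 1) = (y : ℕ) + 1

theorem openedUpper_of_le {k : ℕ} (hk : k ≤ N) : openedUpper N u l k = u k := if_pos hk

theorem openedUpper_of_lt {k : ℕ} (hk : N < k) :
    openedUpper N u l k = 2 * N + 1 - l (2 * N + 1 - k) := if_neg (by omega)

def embed (i : Fin N) : Fin (2 * N) := Fin.castLE (by omega) i

@[simp]
theorem val_embed (i : Fin N) : (embed i : ℕ) = i := rfl

def fold (x : Fin (2 * N)) : Fin N := ⟨min x x.rev, by simp only [Fin.val_rev]; omega⟩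

theorem val_fold_of_lt {x : Fin (2 * N)} (hx : (x : ℕ) < N) : (fold x : ℕ) = x := by
  simp only [fold, Fin.val_rev]; omega

theorem val_fold_of_le {x : Fin (2 * N)} (hx : N ≤ (x : ℕ)) : (fold x : ℕ) = 2 * N - 1 - x := by
  simp only [fold, Fin.val_rev]; omega

theorem fold_rev (x : Fin (2 * N)) : fold x.rev = fold x := by
  simp only [fold, Fin.rev_rev, min_comm]

theorem fold_embed (i : Fin N) : fold (embed i) = i :=
  Fin.ext (val_fold_of_lt i.isLt)

theorem opened_reachable_rev (x : Fin (2 * N)) : (opened N u l).Reachable x x.rev :=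
  reachable_fromRel_of_rel (Or.inr (by simp only [Fin.val_rev]; omega))

theorem opened_reachable_embed_fold (x : Fin (2 * N)) :
    (opened N u l).Reachable (embed (fold x)) x := by
  by_cases hx : (x : ℕ) < N
  · rw [show embed (fold x) = x from Fin.ext (val_fold_of_lt hx)]
  · rw [show embed (fold x) = x.rev by
      ext; simp only [val_embed, val_fold_of_le (not_lt.1 hx), Fin.val_rev]; omega]
    exact (opened_reachable_rev x).symm

theorem opened_reachable_embed_of_rel (i j : Fin N)
    (h : u ((i : ℕ) + 1) = (j : ℕ) + 1 ∨ l ((i : ℕ) + 1) = (j : ℕ) + 1) :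
    (opened N u l).Reachable (embed i) (embed j) := by
  have hi := i.isLt
  have hj := j.isLt
  rcases h with hup | hlow
  · exact reachable_fromRel_of_rel (Or.inl (by rwa [val_embed, openedUpper_of_le (by omega)]))
  · have hrev : (opened N u l).Reachable (embed i).rev (embed j).rev := by
      refine reachable_fromRel_of_rel (Or.inl ?_)
      simp only [Fin.val_rev, val_embed]
      rw [openedUpper_of_lt (by omega), show 2 * N + 1 - (2 * N - (i + 1) + 1) = i + 1 by omega,
        hlow]
      omega
    exact ((opened_reachable_rev _).trans hrev).trans (opened_reachable_rev _).symm

theorem closed_reachable_fold_of_rel (hu : ∀ i, 1 ≤ i → i ≤ N → u i ≤ N)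
    (hl : ∀ i, 1 ≤ i → i ≤ N → l i ≤ N) (x y : Fin (2 * N))
    (h : openedUpper N u l ((x : ℕ) + 1) = (y : ℕ) + 1 ∨
      2 * N + 1 - ((x : ℕ) + 1) = (y : ℕ) + 1) :
    (closed N u l).Reachable (fold x) (fold y) := by
  have hx := x.isLt
  have hy := y.isLt
  rcases h with h | h
  · by_cases hxN : (x : ℕ) < N
    · rw [openedUpper_of_le (by omega)] at h
      have hy_le := hu ((x : ℕ) + 1) (by omega) hxN
      refine reachable_fromRel_of_rel (Or.inl ?_)
      rwa [val_fold_of_lt hxN, val_fold_of_lt (by omega)]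
    · rw [openedUpper_of_lt (by omega)] at h
      have hl_le := hl (2 * N + 1 - ((x : ℕ) + 1)) (by omega) (by omega)
      refine reachable_fromRel_of_rel (Or.inr ?_)
      rw [val_fold_of_le (by omega), val_fold_of_le (by omega),
        show 2 * N - 1 - x + 1 = 2 * N + 1 - (x + 1) by omega]
      omega
  · rw [show y = x.rev from Fin.ext (by simp only [Fin.val_rev]; omega), fold_rev]

end Meander

theorem opening_preserves_components_general (N : ℕ) (u l : ℕ → ℕ)
    (hu : ∀ i, 1 ≤ i → i ≤ N → 1 ≤ u i ∧ u i ≤ N ∧ u (u i) = i ∧ u i ≠ i)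
    (hl : ∀ i, 1 ≤ i → i ≤ N → 1 ≤ l i ∧ l i ≤ N ∧ l (l i) = i ∧ l i ≠ i) :
    Nat.card
      (SimpleGraph.fromRel (fun i j : Fin N =>
        u ((i : ℕ) + 1) = (j : ℕ) + 1 ∨ l ((i : ℕ) + 1) = (j : ℕ) + 1
        )).ConnectedComponent
    = Nat.card
      (SimpleGraph.fromRel (fun i j : Fin (2 * N) =>
        (if (i : ℕ) + 1 ≤ N then u ((i : ℕ) + 1)
          else 2 * N + 1 - l (2 * N + 1 - ((i : ℕ) + 1))) = (j : ℕ) + 1 ∨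
        2 * N + 1 - ((i : ℕ) + 1) = (j : ℕ) + 1
        )).ConnectedComponent :=
  Nat.card_congr <| SimpleGraph.ConnectedComponent.equivOfReachable
    (G := Meander.closed N u l) (H := Meander.opened N u l) Meander.embed Meander.fold
    (SimpleGraph.reachable_of_fromRel_adj _ Meander.opened_reachable_embed_of_rel)
    (SimpleGraph.reachable_of_fromRel_adj _ <| Meander.closed_reachable_fold_of_rel
      (fun i h₁ h₂ => (hu i h₁ h₂).2.1) (fun i h₁ h₂ => (hl i h₁ h₂).2.1))
    (fun i => by rw [Meander.fold_embed]) Meander.opened_reachable_embed_fold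

/-- Opening a closed meander into a lower rainbow meander preserves the number
of connected components.  The closed meander on vertices `1,…,N` is given by an
upper matching involution `u` and a lower matching involution `l` (both
fixed-point free on `{1,…,N}`).  The opened meander on vertices `1,…,2N` has
upper arches `u` together with the reflected lower arches
`(2N+1−i, 2N+1−j)` for lower arches `(i,j)`, and lower arches the rainbow
`(i, 2N+1−i)`.  The two meanders have the same number of connected
components. -/
theorem opening_preserves_components (N : ℕ) (hN : 0 < N) (u l : ℕ → ℕ)
    (hu : ∀ i, 1 ≤ i → i ≤ N → 1 ≤ u i ∧ u i ≤ N ∧ u (u i) = i ∧ u i ≠ i)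
    (hl : ∀ i, 1 ≤ i → i ≤ N → 1 ≤ l i ∧ l i ≤ N ∧ l (l i) = i ∧ l i ≠ i) :
    Nat.card
      (SimpleGraph.fromRel (fun i j : Fin N =>
        u ((i : ℕ) + 1) = (j : ℕ) + 1 ∨ l ((i : ℕ) + 1) = (j : ℕ) + 1
        )).ConnectedComponent
    = Nat.card
      (SimpleGraph.fromRel (fun i j : Fin (2 * N) =>
        (if (i : ℕ) + 1 ≤ N then u ((i : ℕ) + 1)
          else 2 * N + 1 - l (2 * N + 1 - ((i : ℕ) + 1))) = (j : ℕ) + 1 ∨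
        2 * N + 1 - ((i : ℕ) + 1) = (j : ℕ) + 1
        )).ConnectedComponent :=
  opening_preserves_components_general N u l hu hl
end
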